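/- arXiv:2602.11849 — 2 statements merged into one kernel-verified Lean document; each statement's English description precedes it below -/
import Mathlib

section
/- Let A and B be real m×k matrices with m ≤ k such that both A Aᵀ and B Bᵀ are invertible, let E = B − A, and let A⁺ = Aᵀ (A Aᵀ)⁻¹ and B⁺ = Bᵀ (B Bᵀ)⁻¹. Then ‖A⁺ − B⁺‖₂ ≤ ((1+√5)/2) · ‖A⁺‖₂ · ‖B⁺‖₂ · ‖E‖₂. -/
open Matrix
open scoped Matrix.Norms.L2Operator

/-- The spectral norm of a real matrix. -/
noncomputable def specNorm {m n : ℕ} (A : Matrix (Fin m) (Fin n) ℝ) : ℝ :=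
  ‖LinearMap.toContinuousLinearMap (Matrix.toEuclideanLin A)‖

/-- The Moore–Penrose pseudoinverse of a full-row-rank matrix `A`:
`A⁺ = Aᵀ (A Aᵀ)⁻¹`. -/
noncomputable def pinv {m k : ℕ} (A : Matrix (Fin m) (Fin k) ℝ) :
    Matrix (Fin k) (Fin m) ℝ :=
  Aᵀ * (A * Aᵀ)⁻¹

lemma specNorm_eq {m n : ℕ} (A : Matrix (Fin m) (Fin n) ℝ) : specNorm A = ‖A‖ := rfl

lemma norm_transpose' {m n : ℕ} (A : Matrix (Fin m) (Fin n) ℝ) : ‖Aᵀ‖ = ‖A‖ := by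
  rw [← conjTranspose_eq_transpose_of_trivial, Matrix.l2_opNorm_conjTranspose]

lemma norm_tmul {m n : ℕ} (A : Matrix (Fin m) (Fin n) ℝ) : ‖Aᵀ * A‖ = ‖A‖ * ‖A‖ := by
  rw [← conjTranspose_eq_transpose_of_trivial, Matrix.l2_opNorm_conjTranspose_mul_self]

lemma golden_quad {f t : ℝ} (hf : 0 ≤ f) (ht : 0 ≤ t) (h : f * f ≤ t^2 + t * f) :
    f ≤ (1 + Real.sqrt 5) / 2 * t := by
  set s := Real.sqrt 5 with hsdef
  have hs : s ^ 2 = 5 := Real.sq_sqrt (by norm_num)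
  have hs0 : (2:ℝ) ≤ s := by
    nlinarith [Real.sqrt_nonneg 5]
  have key : (2*f - (1+s)*t) * (2*f + (s-1)*t) ≤ 0 := by nlinarith
  rcases le_or_gt (2*f + (s-1)*t) 0 with hc | hc
  · nlinarith
  · nlinarith [key, hc]

section core
variable {m k : ℕ} (A B : Matrix (Fin m) (Fin k) ℝ)

set_option maxHeartbeats 1600000 in
lemma core (hA : IsUnit (A * Aᵀ).det) (hB : IsUnit (B * Bᵀ).det)
    (hab : ‖pinv A‖ ≤ ‖pinv B‖) :
    ‖pinv A - pinv B‖ ≤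
      (1 + Real.sqrt 5) / 2 * (‖pinv A‖ * (‖pinv B‖ * ‖B - A‖)) := by
  set Ap := pinv A with hAp
  set Bp := pinv B with hBp
  set E := B - A with hE
  set F := Ap - Bp with hF
  have hAU : (A * Aᵀ) * (A * Aᵀ)⁻¹ = 1 := Matrix.mul_nonsing_inv _ hA
  have hBV : (B * Bᵀ) * (B * Bᵀ)⁻¹ = 1 := Matrix.mul_nonsing_inv _ hB
  have hVB : (B * Bᵀ)⁻¹ * (B * Bᵀ) = 1 := Matrix.nonsing_inv_mul _ hB
  have hUt : ((A * Aᵀ)⁻¹)ᵀ = (A * Aᵀ)⁻¹ := by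
    rw [Matrix.transpose_nonsing_inv, Matrix.transpose_mul, Matrix.transpose_transpose]
  have hVt : ((B * Bᵀ)⁻¹)ᵀ = (B * Bᵀ)⁻¹ := by
    rw [Matrix.transpose_nonsing_inv, Matrix.transpose_mul, Matrix.transpose_transpose]
  have h1 : A * Ap = 1 := by
    rw [hAp, pinv, ← Matrix.mul_assoc, hAU]
  have h2 : B * Bp = 1 := by
    rw [hBp, pinv, ← Matrix.mul_assoc, hBV]
  -- P = Bp * B is a symmetric idempotent
  set P : Matrix (Fin k) (Fin k) ℝ := Bp * B with hP
  have hPt : Pᵀ = P := by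
    rw [hP, hBp, pinv, Matrix.transpose_mul, Matrix.transpose_mul, hVt,
      Matrix.transpose_transpose, Matrix.mul_assoc]
  have hPP : P * P = P := by
    rw [hP, Matrix.mul_assoc, ← Matrix.mul_assoc B Bp B, h2, Matrix.one_mul]
  have hPBt : P * Bᵀ = Bᵀ := by
    simp only [hP, hBp, pinv, Matrix.mul_assoc, hVB, Matrix.mul_one]
  have hApt : Apᵀ = (A * Aᵀ)⁻¹ * A := by
    rw [hAp, pinv, Matrix.transpose_mul, hUt, Matrix.transpose_transpose]
  have hM : Apᵀ * Ap = (A * Aᵀ)⁻¹ := by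
    rw [hApt, hAp, pinv, Matrix.mul_assoc, ← Matrix.mul_assoc A Aᵀ _, hAU, Matrix.mul_one]
  -- P * F = Bp * (E * Ap)
  have hPF : P * F = Bp * (E * Ap) := by
    simp only [hP, hF, hE, Matrix.mul_sub, Matrix.sub_mul, Matrix.mul_assoc, h1, h2,
      Matrix.mul_one]
  -- (1 - P) * F = -((1 - P) * (Eᵀ * (A * Aᵀ)⁻¹))
  have hQBt : (1 - P) * Bᵀ = 0 := by
    rw [Matrix.sub_mul, Matrix.one_mul, hPBt, sub_self]
  have hQBp : (1 - P) * Bp = 0 := by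
    simp only [Matrix.sub_mul, Matrix.one_mul, hP, Matrix.mul_assoc, h2, Matrix.mul_one,
      sub_self]
  have hQAt : (1 - P) * Aᵀ = -((1 - P) * Eᵀ) := by
    have he : Eᵀ = Bᵀ - Aᵀ := by rw [hE, Matrix.transpose_sub]
    rw [he, Matrix.mul_sub, hQBt, zero_sub, neg_neg]
  have hQF : (1 - P) * F = -((1 - P) * (Eᵀ * (A * Aᵀ)⁻¹)) := by
    rw [hF, Matrix.mul_sub, hQBp, sub_zero, hAp, pinv, ← Matrix.mul_assoc, hQAt,
      Matrix.neg_mul, Matrix.mul_assoc]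
  have hQt : (1 - P)ᵀ = 1 - P := by rw [Matrix.transpose_sub, Matrix.transpose_one, hPt]
  have hQQ : (1 - P) * (1 - P) = 1 - P := by
    rw [Matrix.mul_sub, Matrix.mul_one, Matrix.sub_mul, Matrix.one_mul, hPP]
    abel
  -- decomposition of Fᵀ F
  have hsplit : Fᵀ * F = (P * F)ᵀ * (P * F) + ((1 - P) * F)ᵀ * ((1 - P) * F) := by
    have e1 : F = P * F + (1 - P) * F := by
      rw [← Matrix.add_mul]; simp
    have hPQ : Pᵀ * (1 - P) = 0 := by
      rw [hPt, Matrix.mul_sub, Matrix.mul_one, hPP, sub_self]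
    have hQP : (1 - P)ᵀ * P = 0 := by
      rw [hQt, Matrix.sub_mul, Matrix.one_mul, hPP, sub_self]
    have c1 : (P * F)ᵀ * ((1 - P) * F) = 0 := by
      rw [Matrix.transpose_mul, Matrix.mul_assoc, ← Matrix.mul_assoc Pᵀ (1 - P) F, hPQ,
        Matrix.zero_mul, Matrix.mul_zero]
    have c2 : ((1 - P) * F)ᵀ * (P * F) = 0 := by
      rw [Matrix.transpose_mul, Matrix.mul_assoc, ← Matrix.mul_assoc (1 - P)ᵀ P F, hQP,
        Matrix.zero_mul, Matrix.mul_zero]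
    calc Fᵀ * F = (P * F + (1 - P) * F)ᵀ * (P * F + (1 - P) * F) := by rw [← e1]
      _ = (P * F)ᵀ * (P * F) + ((1 - P) * F)ᵀ * ((1 - P) * F) := by
          rw [Matrix.transpose_add, Matrix.add_mul, Matrix.mul_add, Matrix.mul_add, c1, c2]
          abel
  -- ((1-P)F)ᵀ((1-P)F) = -(M (E ((1-P)F)))
  have htr : ((1 - P) * F)ᵀ = -((A * Aᵀ)⁻¹ * (E * (1 - P))) := by
    rw [hQF, Matrix.transpose_neg, Matrix.transpose_mul, Matrix.transpose_mul, hUt, hQt,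
      Matrix.transpose_transpose, Matrix.mul_assoc]
  have hQFtQF : ((1 - P) * F)ᵀ * ((1 - P) * F) = -((A * Aᵀ)⁻¹ * (E * ((1 - P) * F))) := by
    rw [htr, Matrix.neg_mul, Matrix.mul_assoc, Matrix.mul_assoc,
      ← Matrix.mul_assoc (1 - P) (1 - P) F, hQQ]
  -- norms
  have hq1 : ‖(1 - P : Matrix (Fin k) (Fin k) ℝ)‖ ≤ 1 := by
    have hqq : ‖(1 - P : Matrix (Fin k) (Fin k) ℝ)‖ * ‖(1 - P : Matrix (Fin k) (Fin k) ℝ)‖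
        = ‖(1 - P : Matrix (Fin k) (Fin k) ℝ)‖ := by
      rw [← norm_tmul (1 - P), hQt, hQQ]
    nlinarith [norm_nonneg (1 - P : Matrix (Fin k) (Fin k) ℝ)]
  have hgf : ‖(1 - P) * F‖ ≤ ‖F‖ := by
    calc ‖(1 - P) * F‖ ≤ ‖(1 - P : Matrix (Fin k) (Fin k) ℝ)‖ * ‖F‖ :=
          Matrix.l2_opNorm_mul _ _
      _ ≤ 1 * ‖F‖ := mul_le_mul_of_nonneg_right hq1 (norm_nonneg _)
      _ = ‖F‖ := one_mul _
  have hMn : ‖(A * Aᵀ)⁻¹‖ = ‖Ap‖ * ‖Ap‖ := by rw [← hM, norm_tmul]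
  have hPFn : ‖P * F‖ ≤ ‖Bp‖ * (‖E‖ * ‖Ap‖) := by
    calc ‖P * F‖ = ‖Bp * (E * Ap)‖ := by rw [hPF]
      _ ≤ ‖Bp‖ * ‖E * Ap‖ := Matrix.l2_opNorm_mul _ _
      _ ≤ ‖Bp‖ * (‖E‖ * ‖Ap‖) :=
          mul_le_mul_of_nonneg_left (Matrix.l2_opNorm_mul _ _) (norm_nonneg _)
  have hg2 : ‖(1 - P) * F‖ * ‖(1 - P) * F‖ ≤ ‖Ap‖ * ‖Ap‖ * (‖E‖ * ‖F‖) := by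
    calc ‖(1 - P) * F‖ * ‖(1 - P) * F‖ = ‖((1 - P) * F)ᵀ * ((1 - P) * F)‖ :=
          (norm_tmul _).symm
      _ = ‖(A * Aᵀ)⁻¹ * (E * ((1 - P) * F))‖ := by rw [hQFtQF, norm_neg]
      _ ≤ ‖(A * Aᵀ)⁻¹‖ * ‖E * ((1 - P) * F)‖ := Matrix.l2_opNorm_mul _ _
      _ ≤ ‖(A * Aᵀ)⁻¹‖ * (‖E‖ * ‖(1 - P) * F‖) :=
          mul_le_mul_of_nonneg_left (Matrix.l2_opNorm_mul _ _) (norm_nonneg _)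
      _ ≤ ‖Ap‖ * ‖Ap‖ * (‖E‖ * ‖F‖) := by
          rw [hMn]
          exact mul_le_mul_of_nonneg_left
            (mul_le_mul_of_nonneg_left hgf (norm_nonneg _))
            (by positivity)
  have hf2 : ‖F‖ * ‖F‖ ≤ ‖P * F‖ * ‖P * F‖ + ‖(1 - P) * F‖ * ‖(1 - P) * F‖ := by
    calc ‖F‖ * ‖F‖ = ‖Fᵀ * F‖ := (norm_tmul _).symm
      _ = ‖(P * F)ᵀ * (P * F) + ((1 - P) * F)ᵀ * ((1 - P) * F)‖ := by rw [hsplit]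
      _ ≤ ‖(P * F)ᵀ * (P * F)‖ + ‖((1 - P) * F)ᵀ * ((1 - P) * F)‖ := norm_add_le _ _
      _ = ‖P * F‖ * ‖P * F‖ + ‖(1 - P) * F‖ * ‖(1 - P) * F‖ := by rw [norm_tmul, norm_tmul]
  -- final quadratic bound
  have ha0 : (0:ℝ) ≤ ‖Ap‖ := norm_nonneg _
  have hb0 : (0:ℝ) ≤ ‖Bp‖ := norm_nonneg _
  have he0 : (0:ℝ) ≤ ‖E‖ := norm_nonneg _
  have hf0 : (0:ℝ) ≤ ‖F‖ := norm_nonneg _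
  have hpf0 : (0:ℝ) ≤ ‖P * F‖ := norm_nonneg _
  have key : ‖F‖ * ‖F‖ ≤ (‖Ap‖ * (‖Bp‖ * ‖E‖))^2 + (‖Ap‖ * (‖Bp‖ * ‖E‖)) * ‖F‖ := by
    have h1' : ‖P * F‖ * ‖P * F‖ ≤ (‖Ap‖ * (‖Bp‖ * ‖E‖))^2 := by
      have := mul_le_mul hPFn hPFn hpf0 (by positivity)
      nlinarith
    have h2' : ‖Ap‖ * ‖Ap‖ * (‖E‖ * ‖F‖) ≤ (‖Ap‖ * (‖Bp‖ * ‖E‖)) * ‖F‖ := by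
      nlinarith [mul_nonneg he0 hf0, mul_nonneg ha0 (mul_nonneg he0 hf0)]
    nlinarith [hf2, hg2]
  exact golden_quad hf0 (mul_nonneg ha0 (mul_nonneg hb0 he0)) key

end core

/-- Stewart's pseudoinverse perturbation inequality in the full-row-rank case:
`‖A⁺ - B⁺‖₂ ≤ ((1+√5)/2) ‖A⁺‖₂ ‖B⁺‖₂ ‖B - A‖₂`. -/
theorem stewart_pinv_perturbation {m k : ℕ} (hmk : m ≤ k)
    (A B : Matrix (Fin m) (Fin k) ℝ)
    (hA : IsUnit (A * Aᵀ).det) (hB : IsUnit (B * Bᵀ).det) :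
    specNorm (pinv A - pinv B) ≤
      (1 + Real.sqrt 5) / 2 * specNorm (pinv A) * specNorm (pinv B) *
        specNorm (B - A) := by
  simp only [specNorm_eq]
  rcases le_total ‖pinv A‖ ‖pinv B‖ with h | h
  · calc ‖pinv A - pinv B‖ ≤
        (1 + Real.sqrt 5) / 2 * (‖pinv A‖ * (‖pinv B‖ * ‖B - A‖)) := core A B hA hB h
      _ = (1 + Real.sqrt 5) / 2 * ‖pinv A‖ * ‖pinv B‖ * ‖B - A‖ := by ring
  · calc ‖pinv A - pinv B‖ = ‖pinv B - pinv A‖ := norm_sub_rev _ _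
      _ ≤ (1 + Real.sqrt 5) / 2 * (‖pinv B‖ * (‖pinv A‖ * ‖A - B‖)) := core B A hB hA h
      _ = (1 + Real.sqrt 5) / 2 * ‖pinv A‖ * ‖pinv B‖ * ‖A - B‖ := by ring
      _ = (1 + Real.sqrt 5) / 2 * ‖pinv A‖ * ‖pinv B‖ * ‖B - A‖ := by rw [norm_sub_rev]
end

section
/- Let n ≥ 1 and let X̄, Ẋ be real M×(n+1) matrices, L a real (n+1)×(n+1) matrix, X a real M×(n+1) matrix, and D, D̄ real N×(n+1) matrices with N ≤ n+1 such that D Dᵀ and D̄ D̄ᵀ are invertible, with D⁺ = Dᵀ(D Dᵀ)⁻¹ and D̄⁺ = D̄ᵀ(D̄ D̄ᵀ)⁻¹. Suppose: (i) |X̄_{α,i} − X_{α,i}| ≤ ε for all α, i; (ii) there is κ ≥ 0 with |(Ẋ − X L)_{α,i}| ≤ κ / n³ for all α, i; (iii) for each β there is C_β ≥ 0 with |D̄_{β,i} − D_{β,i}| ≤ ε · C_β for all i. Then ‖Ẋ D⁺ − (X̄ L) D̄⁺‖₂ ≤ ((1+√5)/2) · ε · √(N(n+1)) · (max_β C_β)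 · ‖Ẋ‖₂ · ‖D⁺‖₂ · ‖D̄⁺‖₂ + √(M(n+1)) · ( κ / n³ + ε · max_i ‖L_{:,i}‖₁ ) · ‖D̄⁺‖₂. -/
open Matrix
open scoped Matrix.Norms.L2Operator

/-- For a matrix `L`, the 1-norm of its `i`-th column. -/
def colNorm1 {n m : ℕ} (L : Matrix (Fin n) (Fin m) ℝ) (i : Fin m) : ℝ :=
  ∑ j, |L j i|

lemma specNorm_le_of_bound {m n : ℕ} (A : Matrix (Fin m) (Fin n) ℝ) {c : ℝ} (hc : 0 ≤ c)
    (h : ∀ i j, |A i j| ≤ c) : specNorm A ≤ Real.sqrt (m * n) * c := by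
  apply ContinuousLinearMap.opNorm_le_bound _ (by positivity)
  intro x
  have hAx : ∀ i, (Matrix.toEuclideanLin A x) i = ∑ j, A i j * x j := by
    intro i; rfl
  have hxn : ‖x‖ = Real.sqrt (∑ j, (x j) ^ 2) := by
    rw [EuclideanSpace.norm_eq]
    congr 1
    exact Finset.sum_congr rfl fun j _ => by rw [Real.norm_eq_abs, sq_abs]
  have hx0 : (0:ℝ) ≤ ∑ j, (x j) ^ 2 := Finset.sum_nonneg fun j _ => sq_nonneg _
  rw [EuclideanSpace.norm_eq]
  have key : ∀ i, ‖(Matrix.toEuclideanLin A x) i‖ ^ 2 ≤ (n * c ^ 2) * ∑ j, (x j) ^ 2 := by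
    intro i
    rw [Real.norm_eq_abs, sq_abs, hAx]
    calc (∑ j, A i j * x j) ^ 2 ≤ (∑ j, (A i j) ^ 2) * ∑ j, (x j) ^ 2 :=
          Finset.sum_mul_sq_le_sq_mul_sq _ _ _
    _ ≤ (∑ _j : Fin n, c ^ 2) * ∑ j, (x j) ^ 2 := by
          apply mul_le_mul_of_nonneg_right _ hx0
          exact Finset.sum_le_sum fun j _ => by
            rw [← sq_abs]; exact pow_le_pow_left₀ (abs_nonneg _) (h i j) 2
    _ = (n * c ^ 2) * ∑ j, (x j) ^ 2 := by rw [Finset.sum_const, Finset.card_univ,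
          Fintype.card_fin, nsmul_eq_mul]
  calc Real.sqrt (∑ i, ‖(Matrix.toEuclideanLin A x) i‖ ^ 2)
      ≤ Real.sqrt (∑ _i : Fin m, (n * c ^ 2) * ∑ j, (x j) ^ 2) :=
        Real.sqrt_le_sqrt (Finset.sum_le_sum fun i _ => key i)
    _ = Real.sqrt ((m * n) * c ^ 2 * ∑ j, (x j) ^ 2) := by
        rw [Finset.sum_const, Finset.card_univ, Fintype.card_fin, nsmul_eq_mul]; ring_nf
    _ = Real.sqrt (m * n) * c * ‖x‖ := by
        rw [hxn, Real.sqrt_mul (by positivity), Real.sqrt_mul (by positivity), Real.sqrt_sq hc]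

variable {N k : ℕ}

lemma pinv_fact1 (A : Matrix (Fin N) (Fin k) ℝ) (hA : IsUnit (A * Aᵀ).det) :
    A * pinv A = 1 := by
  rw [pinv, ← Matrix.mul_assoc, Matrix.mul_nonsing_inv _ hA]

lemma pinv_fact2 (A : Matrix (Fin N) (Fin k) ℝ) : (pinv A * A)ᵀ = pinv A * A := by
  rw [pinv, Matrix.transpose_mul, Matrix.transpose_mul, Matrix.transpose_transpose,
    Matrix.transpose_nonsing_inv, Matrix.transpose_mul, Matrix.transpose_transpose,
    Matrix.mul_assoc]

lemma pinv_fact3 (A : Matrix (Fin N) (Fin k) ℝ) (hA : IsUnit (A * Aᵀ).det) :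
    pinv A * A * pinv A = pinv A := by
  rw [Matrix.mul_assoc, pinv_fact1 A hA, Matrix.mul_one]

lemma pinv_fact4 (A : Matrix (Fin N) (Fin k) ℝ) (hA : IsUnit (A * Aᵀ).det) :
    Aᵀ * ((pinv A)ᵀ * pinv A) = pinv A := by
  rw [← Matrix.mul_assoc, ← Matrix.transpose_mul, pinv_fact2 A, pinv_fact3 A hA]

lemma pinv_fact5 (A : Matrix (Fin N) (Fin k) ℝ) (hA : IsUnit (A * Aᵀ).det) :
    (pinv A)ᵀ * (pinv A * A) = (pinv A)ᵀ := by
  rw [← pinv_fact2 A, ← Matrix.transpose_mul, pinv_fact3 A hA]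

lemma pinv_fact6 (A : Matrix (Fin N) (Fin k) ℝ) (hA : IsUnit (A * Aᵀ).det) :
    pinv A * A * Aᵀ = Aᵀ := by
  rw [pinv, Matrix.mul_assoc, Matrix.mul_assoc, Matrix.nonsing_inv_mul _ hA, Matrix.mul_one]

lemma specNorm_nonneg {m n : ℕ} (A : Matrix (Fin m) (Fin n) ℝ) : 0 ≤ specNorm A :=
  norm_nonneg _

lemma specNorm_transpose {m n : ℕ} (A : Matrix (Fin m) (Fin n) ℝ) : specNorm Aᵀ = specNorm A := by
  rw [specNorm_eq, specNorm_eq, ← Matrix.conjTranspose_eq_transpose_of_trivial,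
    Matrix.l2_opNorm_conjTranspose]

lemma specNorm_mul_le {m n p : ℕ} (A : Matrix (Fin m) (Fin n) ℝ) (B : Matrix (Fin n) (Fin p) ℝ) :
    specNorm (A * B) ≤ specNorm A * specNorm B := by
  simp only [specNorm_eq]; exact Matrix.l2_opNorm_mul A B

lemma specNorm_sq {m n : ℕ} (A : Matrix (Fin m) (Fin n) ℝ) :
    specNorm (Aᵀ * A) = specNorm A ^ 2 := by
  have := Matrix.l2_opNorm_conjTranspose_mul_self A
  rw [Matrix.conjTranspose_eq_transpose_of_trivial] at this
  simp only [specNorm_eq, this, sq]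

lemma specNorm_add_le {m n : ℕ} (A B : Matrix (Fin m) (Fin n) ℝ) :
    specNorm (A + B) ≤ specNorm A + specNorm B := by
  simp only [specNorm_eq]; exact norm_add_le A B

lemma specNorm_neg {m n : ℕ} (A : Matrix (Fin m) (Fin n) ℝ) : specNorm (-A) = specNorm A := by
  simp only [specNorm_eq]; exact norm_neg A

lemma specNorm_sub_rev {m n : ℕ} (A B : Matrix (Fin m) (Fin n) ℝ) :
    specNorm (A - B) = specNorm (B - A) := by
  simp only [specNorm_eq]; exact norm_sub_rev A B

lemma proj_norm_le_one {k : ℕ} (P : Matrix (Fin k) (Fin k) ℝ) (hsym : Pᵀ = P)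
    (hidem : P * P = P) : specNorm P ≤ 1 := by
  have h : specNorm P * specNorm P = specNorm P := by
    have := Matrix.l2_opNorm_conjTranspose_mul_self P
    rw [Matrix.conjTranspose_eq_transpose_of_trivial, hsym, hidem] at this
    simpa [specNorm_eq] using this.symm
  nlinarith [specNorm_nonneg P]

lemma specNorm_add_orth {k N : ℕ} (F G : Matrix (Fin k) (Fin N) ℝ) (h : Fᵀ * G = 0) :
    specNorm (F + G) ^ 2 ≤ specNorm F ^ 2 + specNorm G ^ 2 := by
  have h2 : Gᵀ * F = 0 := by
    have := congrArg Matrix.transpose h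
    rwa [Matrix.transpose_mul, Matrix.transpose_transpose, Matrix.transpose_zero] at this
  have key : (F + G)ᵀ * (F + G) = Fᵀ * F + Gᵀ * G := by
    rw [Matrix.transpose_add, Matrix.add_mul, Matrix.mul_add, Matrix.mul_add, h, h2]
    abel
  calc specNorm (F + G) ^ 2 = specNorm ((F + G)ᵀ * (F + G)) := (specNorm_sq _).symm
    _ = specNorm (Fᵀ * F + Gᵀ * G) := by rw [key]
    _ ≤ specNorm (Fᵀ * F) + specNorm (Gᵀ * G) := specNorm_add_le _ _
    _ = specNorm F ^ 2 + specNorm G ^ 2 := by rw [specNorm_sq, specNorm_sq]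

lemma pinv_half (A B : Matrix (Fin N) (Fin k) ℝ) (hA : IsUnit (A * Aᵀ).det)
    (hB : IsUnit (B * Bᵀ).det) :
    specNorm (pinv B - pinv A) ^ 2 ≤
      (specNorm (B - A) * specNorm (pinv A) * specNorm (pinv B)) ^ 2 +
        (specNorm (B - A) * specNorm (pinv A) ^ 2) ^ 2 := by
  set pA := pinv A with hpA
  set pB := pinv B with hpB
  set F := pB * (A - B) * pA with hF
  set G := (pB * B - 1) * pA with hG
  have h1 : pB * A * pA = pB := by rw [Matrix.mul_assoc, pinv_fact1 A hA, Matrix.mul_one]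
  have hFG : F + G = pB - pA := by
    rw [hF, hG, Matrix.mul_sub, Matrix.sub_mul, Matrix.sub_mul, Matrix.one_mul, h1]
    abel
  have horth : Fᵀ * G = 0 := by
    have hz : pBᵀ * (pB * B - 1) = 0 := by
      rw [Matrix.mul_sub, Matrix.mul_one, pinv_fact5 B hB, sub_self]
    have : Fᵀ * G = pAᵀ * ((A - B)ᵀ * (pBᵀ * ((pB * B - 1) * pA))) := by
      rw [hF, hG, Matrix.transpose_mul, Matrix.transpose_mul]
      simp only [Matrix.mul_assoc]
    rw [this, ← Matrix.mul_assoc pBᵀ, hz, Matrix.zero_mul, Matrix.mul_zero, Matrix.mul_zero]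
  have e1 : (1 - pB * B) * (A - B)ᵀ = (1 - pB * B) * Aᵀ := by
    have hBB : pB * B * Bᵀ = Bᵀ := pinv_fact6 B hB
    have hz : (1 - pB * B) * Bᵀ = 0 := by
      rw [Matrix.sub_mul, Matrix.one_mul, hBB, sub_self]
    rw [Matrix.transpose_sub, Matrix.mul_sub, hz, sub_zero]
  have hGalt : G = -((1 - pB * B) * ((A - B)ᵀ * (pAᵀ * pA))) := by
    have step1 : G = -((1 - pB * B) * pA) := by
      rw [hG, Matrix.sub_mul, Matrix.sub_mul, Matrix.one_mul, neg_sub]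
    have fact4' : Aᵀ * (pAᵀ * pA) = pA := by rw [hpA]; exact pinv_fact4 A hA
    rw [step1]
    conv_lhs => rw [← fact4']
    rw [← Matrix.mul_assoc (1 - pB * B) Aᵀ, ← e1, Matrix.mul_assoc]
  have hprojsym : (1 - pB * B)ᵀ = 1 - pB * B := by
    rw [Matrix.transpose_sub, Matrix.transpose_one, pinv_fact2 B]
  have hprojidem : (1 - pB * B) * (1 - pB * B) = 1 - pB * B := by
    have hQ : pB * B * (pB * B) = pB * B := by
      rw [← Matrix.mul_assoc, pinv_fact3 B hB]
    rw [Matrix.mul_sub, Matrix.mul_one, Matrix.sub_mul, Matrix.one_mul, hQ]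
    abel
  have hproj : specNorm (1 - pB * B) ≤ 1 := proj_norm_le_one _ hprojsym hprojidem
  have hFbd : specNorm F ≤ specNorm (B - A) * specNorm pA * specNorm pB := by
    calc specNorm F ≤ specNorm (pB * (A - B)) * specNorm pA := specNorm_mul_le _ _
      _ ≤ specNorm pB * specNorm (A - B) * specNorm pA :=
          mul_le_mul_of_nonneg_right (specNorm_mul_le _ _) (specNorm_nonneg _)
      _ = specNorm (B - A) * specNorm pA * specNorm pB := by
          rw [specNorm_sub_rev]; ring
  have hGbd : specNorm G ≤ specNorm (B - A) * specNorm pA ^ 2 := by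
    rw [hGalt, specNorm_neg]
    calc specNorm ((1 - pB * B) * ((A - B)ᵀ * (pAᵀ * pA)))
        ≤ specNorm (1 - pB * B) * specNorm ((A - B)ᵀ * (pAᵀ * pA)) := specNorm_mul_le _ _
      _ ≤ 1 * specNorm ((A - B)ᵀ * (pAᵀ * pA)) :=
          mul_le_mul_of_nonneg_right hproj (specNorm_nonneg _)
      _ = specNorm ((A - B)ᵀ * (pAᵀ * pA)) := one_mul _
      _ ≤ specNorm (A - B)ᵀ * specNorm (pAᵀ * pA) := specNorm_mul_le _ _
      _ = specNorm (B - A) * specNorm pA ^ 2 := by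
          rw [specNorm_transpose, specNorm_sub_rev, specNorm_sq]
  calc specNorm (pB - pA) ^ 2 = specNorm (F + G) ^ 2 := by rw [hFG]
    _ ≤ specNorm F ^ 2 + specNorm G ^ 2 := specNorm_add_orth _ _ horth
    _ ≤ (specNorm (B - A) * specNorm pA * specNorm pB) ^ 2 +
          (specNorm (B - A) * specNorm pA ^ 2) ^ 2 := by
        gcongr <;> [exact specNorm_nonneg _; exact specNorm_nonneg _]

lemma pinv_perturb (A B : Matrix (Fin N) (Fin k) ℝ) (hA : IsUnit (A * Aᵀ).det)
    (hB : IsUnit (B * Bᵀ).det) :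
    specNorm (pinv B - pinv A) ≤
      Real.sqrt 2 * specNorm (B - A) * specNorm (pinv A) * specNorm (pinv B) := by
  have ha := specNorm_nonneg (pinv A)
  have hb := specNorm_nonneg (pinv B)
  have hE := specNorm_nonneg (B - A)
  have key : specNorm (pinv B - pinv A) ^ 2 ≤
      2 * (specNorm (B - A) * specNorm (pinv A) * specNorm (pinv B)) ^ 2 := by
    rcases le_total (specNorm (pinv A)) (specNorm (pinv B)) with hab | hab
    · have h := pinv_half A B hA hB
      have h1 : specNorm (pinv A) ^ 2 ≤ specNorm (pinv B) ^ 2 := pow_le_pow_left₀ ha hab 2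
      have haux : (specNorm (B - A) * specNorm (pinv A) ^ 2) ^ 2 ≤
          (specNorm (B - A) * specNorm (pinv A) * specNorm (pinv B)) ^ 2 := by
        calc (specNorm (B - A) * specNorm (pinv A) ^ 2) ^ 2
            = (specNorm (B - A) * specNorm (pinv A)) ^ 2 * specNorm (pinv A) ^ 2 := by ring
          _ ≤ (specNorm (B - A) * specNorm (pinv A)) ^ 2 * specNorm (pinv B) ^ 2 :=
              mul_le_mul_of_nonneg_left h1 (sq_nonneg _)
          _ = (specNorm (B - A) * specNorm (pinv A) * specNorm (pinv B)) ^ 2 := by ring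
      linarith
    · have h := pinv_half B A hB hA
      rw [specNorm_sub_rev (pinv A) (pinv B), specNorm_sub_rev A B] at h
      have h1 : specNorm (pinv B) ^ 2 ≤ specNorm (pinv A) ^ 2 := pow_le_pow_left₀ hb hab 2
      have haux : (specNorm (B - A) * specNorm (pinv B) ^ 2) ^ 2 ≤
          (specNorm (B - A) * specNorm (pinv A) * specNorm (pinv B)) ^ 2 := by
        calc (specNorm (B - A) * specNorm (pinv B) ^ 2) ^ 2
            = (specNorm (B - A) * specNorm (pinv B)) ^ 2 * specNorm (pinv B) ^ 2 := by ring
          _ ≤ (specNorm (B - A) * specNorm (pinv B)) ^ 2 * specNorm (pinv A) ^ 2 :=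
              mul_le_mul_of_nonneg_left h1 (sq_nonneg _)
          _ = (specNorm (B - A) * specNorm (pinv A) * specNorm (pinv B)) ^ 2 := by ring
      have heq : (specNorm (B - A) * specNorm (pinv B) * specNorm (pinv A)) ^ 2
          = (specNorm (B - A) * specNorm (pinv A) * specNorm (pinv B)) ^ 2 := by ring
      linarith [h, haux, heq.le]
  have h2 : specNorm (pinv B - pinv A) ≤
      Real.sqrt (2 * (specNorm (B - A) * specNorm (pinv A) * specNorm (pinv B)) ^ 2) := by
    rw [← Real.sqrt_sq (specNorm_nonneg (pinv B - pinv A))]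
    exact Real.sqrt_le_sqrt key
  refine h2.trans (le_of_eq ?_)
  rw [Real.sqrt_mul (by norm_num : (0:ℝ) ≤ 2),
    Real.sqrt_sq (by positivity : (0:ℝ) ≤ specNorm (B - A) * specNorm (pinv A) * specNorm (pinv B))]
  ring

lemma sqrt2_le_phi : Real.sqrt 2 ≤ (1 + Real.sqrt 5) / 2 := by
  nlinarith [Real.sq_sqrt (show (0:ℝ) ≤ 2 by norm_num), Real.sq_sqrt (show (0:ℝ) ≤ 5 by norm_num),
    Real.sqrt_nonneg 2, Real.sqrt_nonneg 5, sq_nonneg (Real.sqrt 2 - 3/2),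
    sq_nonneg (Real.sqrt 5 - 2)]

/-- Explicit leading-order coefficient-error estimate for the differential
formulation (equation (5) of the paper). -/
theorem diff_coefficient_error_explicit {M N n : ℕ} [NeZero N]
    (hn : 1 ≤ n) (hNT : N ≤ n + 1)
    (X Xbar Xdot : Matrix (Fin M) (Fin (n + 1)) ℝ)
    (L : Matrix (Fin (n + 1)) (Fin (n + 1)) ℝ)
    (D Dbar : Matrix (Fin N) (Fin (n + 1)) ℝ)
    (hD : IsUnit (D * Dᵀ).det) (hDbar : IsUnit (Dbar * Dbarᵀ).det)
    (ε κ : ℝ) (hε : 0 ≤ ε) (hκ : 0 ≤ κ)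
    (C : Fin N → ℝ) (hC : ∀ β, 0 ≤ C β)
    (hnoise : ∀ α i, |Xbar α i - X α i| ≤ ε)
    (hspline : ∀ α i, |(Xdot - X * L) α i| ≤ κ / (n : ℝ) ^ 3)
    (hdict : ∀ β i, |Dbar β i - D β i| ≤ ε * C β) :
    specNorm (Xdot * pinv D - (Xbar * L) * pinv Dbar) ≤
      (1 + Real.sqrt 5) / 2 * ε * Real.sqrt (N * (n + 1)) *
          Finset.univ.sup' Finset.univ_nonempty C *
          specNorm Xdot * specNorm (pinv D) * specNorm (pinv Dbar) +
        Real.sqrt (M * (n + 1)) *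
          (κ / (n : ℝ) ^ 3 +
            ε * Finset.univ.sup' Finset.univ_nonempty (fun i => colNorm1 L i)) *
          specNorm (pinv Dbar) := by
  have hn0 : (0:ℝ) < (n : ℝ) ^ 3 := by
    have : (0:ℝ) < (n:ℝ) := by exact_mod_cast hn
    positivity
  set sC := Finset.univ.sup' Finset.univ_nonempty C with hsCdef
  set sL := Finset.univ.sup' Finset.univ_nonempty (fun i => colNorm1 L i) with hsLdef
  have hsC : 0 ≤ sC := by
    obtain ⟨β, hβ⟩ := (Finset.univ_nonempty : (Finset.univ : Finset (Fin N)).Nonempty)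
    exact (hC β).trans (Finset.le_sup' C hβ)
  have hsL : 0 ≤ sL := by
    obtain ⟨i, hi⟩ := (Finset.univ_nonempty : (Finset.univ : Finset (Fin (n+1))).Nonempty)
    exact (Finset.sum_nonneg fun j _ => abs_nonneg (L j i)).trans
      (Finset.le_sup' (fun i => colNorm1 L i) hi)
  have hκn : 0 ≤ κ / (n:ℝ) ^ 3 := div_nonneg hκ hn0.le
  -- decomposition
  have hdec : Xdot * pinv D - (Xbar * L) * pinv Dbar =
      Xdot * (pinv D - pinv Dbar) + (Xdot - Xbar * L) * pinv Dbar := by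
    rw [Matrix.mul_sub, Matrix.sub_mul, sub_add_sub_cancel]
  -- entrywise bound on Xdot - Xbar * L
  have hentry : ∀ α i, |(Xdot - Xbar * L) α i| ≤ κ / (n:ℝ) ^ 3 + ε * sL := by
    intro α i
    have expand : (Xdot - Xbar * L) α i = (Xdot - X * L) α i + ((X - Xbar) * L) α i := by
      simp only [Matrix.sub_apply, Matrix.mul_apply, sub_mul, Finset.sum_sub_distrib]
      ring
    rw [expand]
    refine (abs_add_le _ _).trans (add_le_add (hspline α i) ?_)
    have h1 : |((X - Xbar) * L) α i| ≤ ∑ j, ε * |L j i| := by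
      rw [Matrix.mul_apply]
      refine (Finset.abs_sum_le_sum_abs _ _).trans (Finset.sum_le_sum fun j _ => ?_)
      rw [abs_mul]
      refine mul_le_mul_of_nonneg_right ?_ (abs_nonneg _)
      rw [Matrix.sub_apply, abs_sub_comm]
      exact hnoise α j
    refine h1.trans ?_
    rw [← Finset.mul_sum]
    exact mul_le_mul_of_nonneg_left (Finset.le_sup' (fun i => colNorm1 L i) (Finset.mem_univ i)) hε
  have hterm2 : specNorm (Xdot - Xbar * L) ≤
      Real.sqrt (M * (n+1)) * (κ / (n:ℝ) ^ 3 + ε * sL) := by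
    have := specNorm_le_of_bound (Xdot - Xbar * L)
      (c := κ / (n:ℝ) ^ 3 + ε * sL) (by positivity) hentry
    exact_mod_cast this
  -- entrywise bound on Dbar - D
  have hDent : ∀ β i, |(Dbar - D) β i| ≤ ε * sC := by
    intro β i
    rw [Matrix.sub_apply]
    exact (hdict β i).trans (mul_le_mul_of_nonneg_left (Finset.le_sup' C (Finset.mem_univ β)) hε)
  have hEbd : specNorm (Dbar - D) ≤ Real.sqrt (N * (n+1)) * (ε * sC) := by
    have := specNorm_le_of_bound (Dbar - D) (c := ε * sC) (mul_nonneg hε hsC) hDent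
    exact_mod_cast this
  have hpert : specNorm (pinv D - pinv Dbar) ≤
      Real.sqrt 2 * specNorm (Dbar - D) * specNorm (pinv D) * specNorm (pinv Dbar) := by
    rw [specNorm_sub_rev]
    exact pinv_perturb D Dbar hD hDbar
  -- assemble
  have hXd := specNorm_nonneg Xdot
  have hpD := specNorm_nonneg (pinv D)
  have hpDb := specNorm_nonneg (pinv Dbar)
  have h1 : specNorm Xdot * specNorm (pinv D - pinv Dbar) ≤
      (1 + Real.sqrt 5) / 2 * ε * Real.sqrt (N * (n+1)) * sC *
        specNorm Xdot * specNorm (pinv D) * specNorm (pinv Dbar) := by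
    have step1 : specNorm Xdot * specNorm (pinv D - pinv Dbar) ≤
        specNorm Xdot * (Real.sqrt 2 * (Real.sqrt (N * (n+1)) * (ε * sC)) *
          specNorm (pinv D) * specNorm (pinv Dbar)) := by
      refine mul_le_mul_of_nonneg_left (hpert.trans ?_) hXd
      exact mul_le_mul_of_nonneg_right (mul_le_mul_of_nonneg_right
        (mul_le_mul_of_nonneg_left hEbd (Real.sqrt_nonneg 2)) hpD) hpDb
    refine step1.trans ?_
    have nn : 0 ≤ ε * Real.sqrt (N * (n+1)) * sC * specNorm Xdot *
        specNorm (pinv D) * specNorm (pinv Dbar) :=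
      mul_nonneg (mul_nonneg (mul_nonneg (mul_nonneg (mul_nonneg hε (Real.sqrt_nonneg _)) hsC)
        hXd) hpD) hpDb
    calc specNorm Xdot * (Real.sqrt 2 * (Real.sqrt (N * (n+1)) * (ε * sC)) *
          specNorm (pinv D) * specNorm (pinv Dbar))
        = Real.sqrt 2 * (ε * Real.sqrt (N * (n+1)) * sC * specNorm Xdot *
            specNorm (pinv D) * specNorm (pinv Dbar)) := by ring
      _ ≤ (1 + Real.sqrt 5) / 2 * (ε * Real.sqrt (N * (n+1)) * sC * specNorm Xdot *
            specNorm (pinv D) * specNorm (pinv Dbar)) :=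
          mul_le_mul_of_nonneg_right sqrt2_le_phi nn
      _ = (1 + Real.sqrt 5) / 2 * ε * Real.sqrt (N * (n+1)) * sC *
            specNorm Xdot * specNorm (pinv D) * specNorm (pinv Dbar) := by ring
  have h2 : specNorm (Xdot - Xbar * L) * specNorm (pinv Dbar) ≤
      Real.sqrt (M * (n+1)) * (κ / (n:ℝ) ^ 3 + ε * sL) * specNorm (pinv Dbar) :=
    mul_le_mul_of_nonneg_right hterm2 hpDb
  calc specNorm (Xdot * pinv D - (Xbar * L) * pinv Dbar)
      = specNorm (Xdot * (pinv D - pinv Dbar) + (Xdot - Xbar * L) * pinv Dbar) := by rw [hdec]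
    _ ≤ specNorm (Xdot * (pinv D - pinv Dbar)) + specNorm ((Xdot - Xbar * L) * pinv Dbar) :=
        specNorm_add_le _ _
    _ ≤ specNorm Xdot * specNorm (pinv D - pinv Dbar) +
          specNorm (Xdot - Xbar * L) * specNorm (pinv Dbar) :=
        add_le_add (specNorm_mul_le _ _) (specNorm_mul_le _ _)
    _ ≤ _ := add_le_add h1 h2
end
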